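/- The primary un-reduced SODE Γ_1 of (Γ̄, ω) is the unique SODE on M that is Tπ-related to Γ̄ and is tangent to the horizontal distribution of the connection ω (regarded as a submanifold of TM). -/

import Mathlib

/- STATEMENT 13: The primary un-reduced SODE Γ₁ of (Γ̄, ω) is the unique SODE on M that is
Tπ-related to Γ̄ and tangent to the horizontal distribution of the connection ω (regarded as
a submanifold of TM).

Formalization: trivialized bundle M = B × F, π = fst, TM = M × M, connection with
horizontal-lift map σ, quasi-velocity (vertical) function v(q) = ϖ_{q.1}(q.2) = q.2.2 − σ(q.1) q.2.1
cutting out the horizontal distribution {v = 0} ⊆ TM.  Tangency of a SODE Γ to the horizontal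
distribution is the invariance condition Γ(v) = 0, i.e. dv(Γ) = 0 (as in the paper's proof:
Γ₁(v^a) = 0).  Γ̄ q = (q.2, f̄ q) and Γ₁ = Γ̄^H + X_ω as in the paper. -/

noncomputable section

variable {B F : Type*} [NormedAddCommGroup B] [NormedSpace ℝ B]
  [NormedAddCommGroup F] [NormedSpace ℝ F]

def GammaBarH (σ : (B × F) → (B →L[ℝ] F)) (fbar : B × B → B)
    (p : (B × F) × (B × F)) : (B × F) × (B × F) :=
  ((p.2.1, σ p.1 p.2.1),
   (fbar (p.1.1, p.2.1),
    σ p.1 (fbar (p.1.1, p.2.1)) + (fderiv ℝ σ p.1 p.2) p.2.1))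

def XomegaAb (σ : (B × F) → (B →L[ℝ] F))
    (p : (B × F) × (B × F)) : (B × F) × (B × F) :=
  (((0 : B), p.2.2 - σ p.1 p.2.1), ((0 : B), (0 : F)))

/-- The primary un-reduced SODE Γ₁ = Γ̄^H + X_ω. -/
def Gamma1 (σ : (B × F) → (B →L[ℝ] F)) (fbar : B × B → B)
    (p : (B × F) × (B × F)) : (B × F) × (B × F) :=
  GammaBarH σ fbar p + XomegaAb σ p

lemma fderiv_vert {B F : Type*} [NormedAddCommGroup B] [NormedSpace ℝ B]
    [NormedAddCommGroup F] [NormedSpace ℝ F]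
    (σ : (B × F) → (B →L[ℝ] F)) (hσ : ContDiff ℝ (⊤ : ℕ∞) σ)
    (p w : (B × F) × (B × F)) :
    fderiv ℝ (fun q : (B × F) × (B × F) => q.2.2 - σ q.1 q.2.1) p w
      = w.2.2 - (σ p.1 w.2.1 + fderiv ℝ σ p.1 w.1 p.2.1) := by
  have hc : HasFDerivAt (fun q : (B × F) × (B × F) => σ q.1)
      ((fderiv ℝ σ p.1).comp (ContinuousLinearMap.fst ℝ (B × F) (B × F))) p :=
    (hσ.differentiable (by simp) p.1).hasFDerivAt.comp p (hasFDerivAt_fst)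
  have hu : HasFDerivAt (fun q : (B × F) × (B × F) => q.2.1)
      ((ContinuousLinearMap.fst ℝ B F).comp (ContinuousLinearMap.snd ℝ (B × F) (B × F))) p :=
    hasFDerivAt_fst.comp p hasFDerivAt_snd
  have h2 := hc.clm_apply hu
  have h3 : HasFDerivAt (fun q : (B × F) × (B × F) => q.2.2)
      ((ContinuousLinearMap.snd ℝ B F).comp (ContinuousLinearMap.snd ℝ (B × F) (B × F))) p :=
    hasFDerivAt_snd.comp p hasFDerivAt_snd
  rw [(show HasFDerivAt (fun q : (B × F) × (B × F) => q.2.2 - σ q.1 q.2.1) _ p from h3.sub h2).fderiv]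
  simp

theorem primary_unreduced_sode_unique
    (σ : (B × F) → (B →L[ℝ] F)) (hσ : ContDiff ℝ (⊤ : ℕ∞) σ)
    (fbar : B × B → B) :
    -- Γ₁ is a SODE, Tπ-related to Γ̄, tangent to the horizontal distribution …
    ((∀ p, (Gamma1 σ fbar p).1 = p.2) ∧
     (∀ p, ((Gamma1 σ fbar p).1.1, (Gamma1 σ fbar p).2.1)
         = (p.2.1, fbar (p.1.1, p.2.1))) ∧
     (∀ p, fderiv ℝ (fun q : (B × F) × (B × F) => q.2.2 - σ q.1 q.2.1) p
         (Gamma1 σ fbar p) = 0)) ∧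
    -- … and it is the unique such SODE
    (∀ Γ : ((B × F) × (B × F)) → ((B × F) × (B × F)),
      (∀ p, (Γ p).1 = p.2) →
      (∀ p, ((Γ p).1.1, (Γ p).2.1) = (p.2.1, fbar (p.1.1, p.2.1))) →
      (∀ p, fderiv ℝ (fun q : (B × F) × (B × F) => q.2.2 - σ q.1 q.2.1) p (Γ p) = 0) →
      Γ = Gamma1 σ fbar) := by
  have hG1 : ∀ p : (B × F) × (B × F), Gamma1 σ fbar p
      = ((p.2.1, p.2.2),
         (fbar (p.1.1, p.2.1),
          σ p.1 (fbar (p.1.1, p.2.1)) + (fderiv ℝ σ p.1 p.2) p.2.1)) := by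
    intro p
    simp [Gamma1, GammaBarH, XomegaAb, Prod.add_def]
  refine ⟨⟨fun p => by rw [hG1], fun p => by rw [hG1], fun p => ?_⟩, ?_⟩
  · rw [fderiv_vert σ hσ, hG1]; simp
  · intro Γ h1 h2 h3
    funext p
    have e1 : (Γ p).1 = p.2 := h1 p
    have e2 : (Γ p).2.1 = fbar (p.1.1, p.2.1) := congrArg Prod.snd (h2 p)
    have e3 := h3 p
    rw [fderiv_vert σ hσ, e1, e2, sub_eq_zero] at e3
    rw [hG1]
    refine Prod.ext e1 (Prod.ext e2 ?_)
    simpa using e3
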